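/- arXiv:1510.02281 — 5 statements merged into one kernel-verified Lean document; each statement's English description precedes it below -/
import Mathlib

section
/- Let J ≥ 1 and let K ⊂ X = {0,…,J}^{ℤ₋} be a subshift. There exists a continuous g-function g on X with respect to which K is g-invariant if and only if ⋂_{j=0}^{J} (closure(K_e^c))^{*,j} = ∅. -/
open Set Topology

def shiftX {J : ℕ} (ξ : ℕ → Fin (J+1)) : ℕ → Fin (J+1) := fun n => ξ (n+1)

def consX {J : ℕ} (a : Fin (J+1)) (ξ : ℕ → Fin (J+1)) : ℕ → Fin (J+1) :=
  fun n => match n with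
  | 0 => a
  | m+1 => ξ m

def starX {J : ℕ} (j : Fin (J+1)) (ξ : ℕ → Fin (J+1)) : ℕ → Fin (J+1) :=
  fun n => match n with
  | 0 => ξ 0 + j
  | m+1 => ξ (m+1)

/-- The set of exit points of `E`: points outside `E` whose shift lies in `E`. -/
def exitX {J : ℕ} (E : Set (ℕ → Fin (J+1))) : Set (ℕ → Fin (J+1)) :=
  {ξ | ξ ∉ E ∧ shiftX ξ ∈ E}

/-- A subshift: a nonempty, closed, proper, shift-invariant subset. -/
def IsSubshift {J : ℕ} (K : Set (ℕ → Fin (J+1))) : Prop :=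
  K.Nonempty ∧ IsClosed K ∧ K ≠ Set.univ ∧ K = shiftX '' K

/-- The word `(w₁,…,w_m)` occurs in `ξ` if for some `i ≥ 0` the consecutive
coordinates `(ξ(i+m−1),…,ξ(i))` equal `(w₁,…,w_m)`. -/
def OccursX {J : ℕ} (w : List (Fin (J+1))) (ξ : ℕ → Fin (J+1)) : Prop :=
  ∃ i : ℕ, ∀ k, k < w.length → ξ (i + k) = w.reverse.getD k 0

/-- A subshift of finite type: defined by a finite nonempty set of forbidden words. -/
def IsFiniteType {J : ℕ} (K : Set (ℕ → Fin (J+1))) : Prop :=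
  ∃ F : Finset (List (Fin (J+1))), F.Nonempty ∧ K = {ξ | ∀ w ∈ F, ¬ OccursX w ξ}


lemma continuous_consX {J : ℕ} (a : Fin (J+1)) : Continuous (consX a : (ℕ → Fin (J+1)) → _) := by
  apply continuous_pi
  intro n
  cases n with
  | zero => exact continuous_const
  | succ m => exact continuous_apply m

lemma continuous_shiftX {J : ℕ} : Continuous (shiftX : (ℕ → Fin (J+1)) → _) :=
  continuous_pi fun n => continuous_apply (n+1)

lemma consX_shiftX {J : ℕ} (ξ : ℕ → Fin (J+1)) : consX (ξ 0) (shiftX ξ) = ξ := by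
  funext n; cases n <;> rfl

lemma shiftX_consX {J : ℕ} (a : Fin (J+1)) (η : ℕ → Fin (J+1)) : shiftX (consX a η) = η := by
  funext n; rfl

/-- For a subshift `K ⊂ {0,…,J}^{ℤ₋}` there is a continuous `g`-function
with respect to which `K` is invariant iff `⋂_{j=0}^{J} (closure K_e^c)^{*,j} = ∅`. -/
theorem subshift_has_gFunction_iff {J : ℕ} (hJ : 1 ≤ J)
    (K : Set (ℕ → Fin (J+1))) (hK : IsSubshift K) :
    (∃ g : (ℕ → Fin (J+1)) → ℝ, Continuous g ∧ (∀ ξ, 0 ≤ g ξ) ∧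
        (∀ ξ, ∑ a : Fin (J+1), g (consX a ξ) = 1) ∧
        (∀ ξ ∈ exitX K, g ξ = 0)) ↔
      (⋂ j : Fin (J+1), {ξ : ℕ → Fin (J+1) | starX j ξ ∈ closure (exitX K)}) = ∅ := by
  constructor
  · rintro ⟨g, hgc, -, hgsum, hgE⟩
    by_contra h
    obtain ⟨ξ, hξ⟩ := Set.nonempty_iff_ne_empty.mpr h
    simp only [Set.mem_iInter, Set.mem_setOf_eq] at hξ
    have hzero : ∀ η ∈ closure (exitX K), g η = 0 := fun η hη =>
      closure_minimal (fun x hx => hgE x hx)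
        (isClosed_singleton.preimage hgc) hη
    have h1 := hgsum (shiftX ξ)
    have hz : ∀ a : Fin (J+1), g (consX a (shiftX ξ)) = 0 := by
      intro a
      have hc : consX a (shiftX ξ) = starX (a - ξ 0) ξ := by
        funext n
        cases n with
        | zero =>
          show a = ξ 0 + (a - ξ 0)
          exact eq_add_of_sub_eq' rfl
        | succ m => rfl
      rw [hc]; exact hzero _ (hξ _)
    rw [Finset.sum_congr rfl (fun a _ => hz a)] at h1
    simp at h1
  · intro hempty
    set C := closure (exitX K) with hC
    set U : Fin (J+1) → Set (ℕ → Fin (J+1)) := fun a => {η | consX a η ∉ C} with hU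
    have hUopen : ∀ a, IsOpen (U a) := fun a =>
      (isClosed_closure.preimage (continuous_consX a)).isOpen_compl
    have hcover : (univ : Set (ℕ → Fin (J+1))) ⊆ ⋃ a, U a := by
      intro η _
      by_contra hη
      simp only [mem_iUnion, not_exists, hU, mem_setOf_eq, not_not] at hη
      have : consX (0 : Fin (J+1)) η ∈ ⋂ j : Fin (J+1),
          {ξ : ℕ → Fin (J+1) | starX j ξ ∈ C} := by
        simp only [mem_iInter, mem_setOf_eq]
        intro j
        have hs : starX j (consX (0 : Fin (J+1)) η) = consX j η := by
          funext n
          cases n with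
          | zero => show (0 : Fin (J+1)) + j = j; exact zero_add j
          | succ m => rfl
        rw [hs]; exact hη j
      rw [hempty] at this
      exact this
    obtain ⟨f, hf⟩ := PartitionOfUnity.exists_isSubordinate isClosed_univ U hUopen hcover
    refine ⟨fun ξ => ∑ b : Fin (J+1), (if ξ 0 = b then (1:ℝ) else 0) * f b (shiftX ξ),
      ?_, ?_, ?_, ?_⟩
    · apply continuous_finset_sum
      intro b _
      exact (((continuous_of_discreteTopology (f := fun c : Fin (J+1) =>
        if c = b then (1:ℝ) else 0)).comp (continuous_apply 0))).mul
        ((f b).continuous.comp continuous_shiftX)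
    · intro ξ
      apply Finset.sum_nonneg
      intro b _
      exact mul_nonneg (by split <;> norm_num) (f.nonneg b _)
    · intro η
      have key : ∀ a : Fin (J+1),
          (∑ b : Fin (J+1), (if (consX a η) 0 = b then (1:ℝ) else 0) * f b (shiftX (consX a η)))
            = f a η := by
        intro a
        have h0 : (consX a η) 0 = a := rfl
        rw [shiftX_consX]
        simp only [h0, ite_mul, one_mul, zero_mul]
        exact Finset.sum_ite_eq (Finset.univ) a (fun b => f b η) |>.trans (by simp)
      rw [Finset.sum_congr rfl (fun a _ => key a)]
      have := f.sum_eq_one (mem_univ η)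
      rwa [finsum_eq_sum_of_fintype] at this
    · intro ξ hξ
      have hmem : ξ ∈ C := subset_closure hξ
      have hnot : shiftX ξ ∉ U (ξ 0) := by
        simp only [hU, mem_setOf_eq, not_not, consX_shiftX]
        exact hmem
      have hz : f (ξ 0) (shiftX ξ) = 0 := by
        by_contra hne
        exact hnot (hf (ξ 0) (subset_closure (Function.mem_support.mpr hne)))
      have : ∀ b : Fin (J+1),
          (if ξ 0 = b then (1:ℝ) else 0) * f b (shiftX ξ) = 0 := by
        intro b
        by_cases hb : ξ 0 = b
        · subst hb; simp [hz]
        · simp [hb]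
      show (∑ b : Fin (J+1), (if ξ 0 = b then (1:ℝ) else 0) * f b (shiftX ξ)) = 0
      rw [Finset.sum_congr rfl (fun b _ => this b)]
      simp
end

section
/- Let J ≥ 1 and let K ⊂ X = {0,…,J}^{ℤ₋} be a subshift of finite type. Then the barrier set K_b := {ξ ∈ K : ξ^{*,j} ∉ K for every j ∈ {1,…,J}} is a closed subset of X. -/
open Set Topology

lemma starX_apply_pos {J : ℕ} (j : Fin (J+1)) (ξ : ℕ → Fin (J+1)) {n : ℕ} (hn : n ≠ 0) :
    starX j ξ n = ξ n := by
  cases n with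
  | zero => exact absurd rfl hn
  | succ m => rfl

lemma starX_coord_continuous {J : ℕ} (j : Fin (J+1)) (k : ℕ) :
    Continuous (fun ξ : ℕ → Fin (J+1) => starX j ξ k) := by
  cases k with
  | zero =>
    have : (fun ξ : ℕ → Fin (J+1) => starX j ξ 0) =
        (fun a : Fin (J+1) => a + j) ∘ (fun ξ : ℕ → Fin (J+1) => ξ 0) := rfl
    rw [this]
    exact (continuous_of_discreteTopology).comp (continuous_apply 0)
  | succ m => exact continuous_apply (m+1)

/-- If `K` is a subshift of finite type, then the barrier set
`K_b = {ξ ∈ K : ξ^{*,j} ∉ K for all j ∈ {1,…,J}}` is closed. -/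
theorem barrier_set_isClosed_of_finiteType {J : ℕ} (hJ : 1 ≤ J)
    (K : Set (ℕ → Fin (J+1))) (hK : IsSubshift K) (hft : IsFiniteType K) :
    IsClosed {ξ : ℕ → Fin (J+1) | ξ ∈ K ∧ ∀ j : Fin (J+1), j ≠ 0 → starX j ξ ∉ K} := by
  obtain ⟨F, hFne, hF⟩ := hft
  -- the empty word is not in F
  have hnil : ([] : List (Fin (J+1))) ∉ F := by
    intro h
    obtain ⟨ξ₀, hξ₀⟩ := hK.1
    rw [hF] at hξ₀
    exact hξ₀ [] h ⟨0, fun k hk => absurd hk (by simp)⟩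
  have hset : {ξ : ℕ → Fin (J+1) | ξ ∈ K ∧ ∀ j : Fin (J+1), j ≠ 0 → starX j ξ ∉ K} =
      K ∩ ⋂ (j : Fin (J+1)) (_ : j ≠ 0),
        {ξ : ℕ → Fin (J+1) | ∃ w ∈ F, ∀ k < w.length, starX j ξ k = w.reverse.getD k 0} := by
    ext ξ
    simp only [Set.mem_setOf_eq, Set.mem_inter_iff, Set.mem_iInter]
    constructor
    · rintro ⟨hξK, hb⟩
      refine ⟨hξK, fun j hj => ?_⟩
      have hnot := hb j hj
      rw [hF] at hnot
      simp only [Set.mem_setOf_eq, not_forall, not_not] at hnot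
      obtain ⟨w, hwF, i, hi⟩ := hnot
      rcases Nat.eq_zero_or_pos i with rfl | hipos
      · exact ⟨w, hwF, fun k hk => by simpa using hi k hk⟩
      · exfalso
        have hocc : OccursX w ξ := by
          refine ⟨i, fun k hk => ?_⟩
          rw [← hi k hk, starX_apply_pos j ξ (by omega)]
        rw [hF] at hξK
        exact hξK w hwF hocc
    · rintro ⟨hξK, hb⟩
      refine ⟨hξK, fun j hj hmem => ?_⟩
      obtain ⟨w, hwF, hw⟩ := hb j hj
      rw [hF] at hmem
      exact hmem w hwF ⟨0, fun k hk => by simpa using hw k hk⟩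
  rw [hset]
  refine hK.2.1.inter ?_
  refine isClosed_iInter fun j => isClosed_iInter fun _ => ?_
  have : {ξ : ℕ → Fin (J+1) | ∃ w ∈ F, ∀ k < w.length, starX j ξ k = w.reverse.getD k 0} =
      ⋃ w ∈ (F : Finset (List (Fin (J+1)))),
        ⋂ (k : ℕ) (_ : k < w.length),
          (fun ξ : ℕ → Fin (J+1) => starX j ξ k) ⁻¹' {w.reverse.getD k 0} := by
    ext ξ
    simp [Set.mem_iUnion, Set.mem_iInter]
  rw [this]
  refine F.finite_toSet.isClosed_biUnion fun w _ => ?_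
  exact isClosed_iInter fun k => isClosed_iInter fun _ =>
    (isClosed_singleton).preimage (starX_coord_continuous j k)
end

section
/- Let J ≥ 1 and let K ⊂ X = {0,…,J}^{ℤ₋} be a subshift. The following three conditions are equivalent: (i) K is of finite type; (ii) the set K_e^c of exit points of K is closed; (iii) K ∩ closure(K_e^c) = ∅. -/
open Set Topology

/-!
A subshift `K` is of finite type exactly when it has finite memory: for some `N`, a point whose
shift lies in `K` lies in `K` as soon as its first `N` symbols agree with a point of `K`. Given
finite memory, let `η` be a point all of whose `N`-blocks occur in `K`. Following `η` for `n`
symbols and then a point of `K` that matches the `N`-block of `η` at `n` gives a point whose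
`n`-th shift is in `K`, hence, applying the memory `n` times, a point of `K`; these points
converge to `η`. So `K` is cut out by the words of a fixed length `≥ N` that do not occur in `K`.

Finite memory `N` says exactly that no exit point agrees with a point of `K` on `N` symbols;
this keeps exit points away from `K`, so `K` misses their closure. Conversely, if `K` misses that
compact closure, compactness yields such a uniform `N`. Finally, the closure of the exit points
consists of points whose shift lies in `K`, so it adds no new exit points iff it misses `K`.
-/

open PiNat

lemma continuous_shiftX_s5 {J : ℕ} : Continuous (shiftX (J := J)) :=
  continuous_pi fun n => continuous_apply (n + 1)

lemma shiftX_iterate_apply {J : ℕ} (i : ℕ) (ξ : ℕ → Fin (J+1)) (k : ℕ) :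
    shiftX^[i] ξ k = ξ (i + k) := by
  induction i generalizing ξ with
  | zero => simp
  | succ i ih =>
    rw [Function.iterate_succ_apply, ih]
    simp only [shiftX, Nat.add_right_comm]

lemma shiftX_iterate_mem_cylinder {J : ℕ} {ξ η : ℕ → Fin (J+1)} {i n : ℕ}
    (h : η ∈ cylinder ξ (i + n)) : shiftX^[i] η ∈ cylinder (shiftX^[i] ξ) n := fun k hk => by
  simpa only [shiftX_iterate_apply] using h (i + k) (by omega)

section Cylinders

variable {E : ℕ → Type*} [∀ n, TopologicalSpace (E n)] [∀ n, DiscreteTopology (E n)]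

lemma IsClosed.mem_of_forall_inter_cylinder_nonempty {s : Set (∀ n, E n)} (hs : IsClosed s)
    {x : ∀ n, E n} (h : ∀ n, (s ∩ cylinder x n).Nonempty) : x ∈ s := by
  by_contra hx
  obtain ⟨n, hn⟩ := exists_disjoint_cylinder hs hx
  exact not_disjoint_iff_nonempty_inter.2 (h n) hn

lemma IsCompact.exists_forall_disjoint_cylinder {s C : Set (∀ n, E n)} (hC : IsCompact C)
    (hs : IsClosed s) (hCs : Disjoint C s) : ∃ N, ∀ x ∈ C, Disjoint s (cylinder x N) := by
  let U : ℕ → Set (∀ n, E n) := fun N => {x | Disjoint s (cylinder x N)}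
  have hU_open : ∀ N, IsOpen (U N) := fun N => isOpen_iff_forall_mem_open.2 fun x hx =>
    ⟨cylinder x N, fun y hy => by simpa [U, mem_cylinder_iff_eq.1 hy] using hx,
      isOpen_cylinder _ x N, self_mem_cylinder x N⟩
  have hU_mono : Monotone U := fun m n hmn x hx => hx.mono_right (cylinder_anti x hmn)
  have hCU : C ⊆ ⋃ N, U N := fun x hx =>
    mem_iUnion.2 (exists_disjoint_cylinder hs (hCs.notMem_of_mem_left hx))
  exact hC.elim_directed_cover U hU_open hCU hU_mono.directed_le

end Cylinders

def HasMemory {J : ℕ} (K : Set (ℕ → Fin (J+1))) (N : ℕ) : Prop :=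
  ∀ η, shiftX η ∈ K → (K ∩ cylinder η N).Nonempty → η ∈ K

def prefixWordX {J : ℕ} (ξ : ℕ → Fin (J+1)) (L : ℕ) : List (Fin (J+1)) :=
  (List.ofFn fun k : Fin L => ξ k).reverse

section Memory

variable {J : ℕ} {K : Set (ℕ → Fin (J+1))} {N : ℕ}

lemma length_prefixWordX (ξ : ℕ → Fin (J+1)) (L : ℕ) : (prefixWordX ξ L).length = L := by
  simp [prefixWordX]

lemma occursX_prefixWordX_iff {ξ ζ : ℕ → Fin (J+1)} {L : ℕ} :
    OccursX (prefixWordX ξ L) ζ ↔ ∃ i, shiftX^[i] ζ ∈ cylinder ξ L := by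
  simp +contextual [OccursX, prefixWordX, shiftX_iterate_apply, List.getD_eq_getElem?_getD]

lemma HasMemory.mem_of_iterate_mem (hK : HasMemory K N) {n : ℕ} {ρ : ℕ → Fin (J+1)}
    (hn : shiftX^[n] ρ ∈ K) (hρ : ∀ j < n, (K ∩ cylinder (shiftX^[j] ρ) N).Nonempty) :
    ρ ∈ K := by
  induction n generalizing ρ with
  | zero => exact hn
  | succ n ih => exact hK ρ (ih hn fun j hj => hρ (j + 1) (by omega)) (hρ 0 n.succ_pos)

lemma HasMemory.mem_of_forall_inter_cylinder_nonempty (hK : HasMemory K N) (hKc : IsClosed K)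
    {η : ℕ → Fin (J+1)} (hη : ∀ i, (K ∩ cylinder (shiftX^[i] η) N).Nonempty) : η ∈ K := by
  refine hKc.mem_of_forall_inter_cylinder_nonempty fun n => ?_
  obtain ⟨θ, hθK, hθ⟩ := hη n
  let ρ : ℕ → Fin (J+1) := fun k => if k < n then η k else θ (k - n)
  have hρθ : shiftX^[n] ρ = θ := funext fun k => by simp [ρ, shiftX_iterate_apply]
  have hρη : ρ ∈ cylinder η (n + N) := fun k hk => by
    by_cases h : k < n
    · simp [ρ, h]
    · simpa [ρ, h, shiftX_iterate_apply, Nat.add_sub_cancel' (not_lt.1 h)]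
        using hθ (k - n) (by omega)
  have hρK : ρ ∈ K := hK.mem_of_iterate_mem (hρθ ▸ hθK) fun j hj => by
    rw [mem_cylinder_iff_eq.1 (shiftX_iterate_mem_cylinder (cylinder_anti η (by omega) hρη))]
    exact hη j
  exact ⟨ρ, hρK, cylinder_anti η (by omega) hρη⟩

lemma HasMemory.disjoint_closure_exitX (hK : HasMemory K N) :
    Disjoint K (closure (exitX K)) := by
  refine disjoint_left.2 fun ξ hξK hξ => ?_
  obtain ⟨η, hηξ, hηK, hηs⟩ :=
    mem_closure_iff.1 hξ _ (isOpen_cylinder _ ξ N) (self_mem_cylinder ξ N)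
  exact hηK (hK η hηs ⟨ξ, hξK, (mem_cylinder_comm _ _ _).1 hηξ⟩)

lemma exists_hasMemory_iff_disjoint_closure_exitX (hKc : IsClosed K) :
    (∃ N, HasMemory K N) ↔ Disjoint K (closure (exitX K)) := by
  refine ⟨fun ⟨N, hN⟩ => hN.disjoint_closure_exitX, fun h => ?_⟩
  obtain ⟨N, hN⟩ := isClosed_closure.isCompact.exists_forall_disjoint_cylinder hKc h.symm
  refine ⟨N, fun η hηs hηN => by_contra fun hηK => ?_⟩
  exact not_disjoint_iff_nonempty_inter.2 hηN (hN η (subset_closure ⟨hηK, hηs⟩))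

lemma isClosed_exitX_iff (hKc : IsClosed K) :
    IsClosed (exitX K) ↔ Disjoint K (closure (exitX K)) := by
  refine ⟨fun h => by rw [h.closure_eq]; exact disjoint_right.2 fun η hη => hη.1, fun h => ?_⟩
  refine closure_subset_iff_isClosed.1 fun η hη => ⟨disjoint_right.1 h hη, ?_⟩
  exact closure_minimal (fun ζ hζ => hζ.2) (hKc.preimage continuous_shiftX_s5) hη

lemma IsFiniteType.exists_hasMemory (hK : IsFiniteType K) : ∃ N, HasMemory K N := by
  obtain ⟨F, -, rfl⟩ := hK
  refine ⟨F.sup List.length, fun η hηs ⟨ζ, hζ, hζη⟩ w hw ⟨i, hi⟩ => ?_⟩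
  cases i with
  | zero =>
    refine hζ w hw ⟨0, fun k hk => ?_⟩
    have hkN : k < F.sup List.length := hk.trans_le (Finset.le_sup (f := List.length) hw)
    simpa [hζη k hkN] using hi k hk
  | succ i => exact hηs w hw ⟨i, fun k hk => by simpa [shiftX, Nat.add_right_comm] using hi k hk⟩

lemma HasMemory.isFiniteType (hK : HasMemory K N) (hKc : IsClosed K) (hshift : MapsTo shiftX K K)
    (hKu : K ≠ univ) : IsFiniteType K := by
  obtain ⟨ξ₀, hξ₀⟩ := (ne_univ_iff_exists_notMem K).1 hKu
  obtain ⟨m, hm⟩ := exists_disjoint_cylinder hKc hξ₀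
  set L := max N m
  -- Forbidden words: those of length `L` occurring in no point of `K`, e.g. the prefix of `ξ₀`.
  have hfin : {w : List (Fin (J+1)) | w.length = L ∧ ∀ ζ ∈ K, ¬ OccursX w ζ}.Finite :=
    (List.finite_length_eq _ L).subset fun w hw => hw.1
  refine ⟨hfin.toFinset, ⟨prefixWordX ξ₀ L, ?_⟩, ?_⟩
  · refine hfin.mem_toFinset.2 ⟨length_prefixWordX ξ₀ L, fun ζ hζ hocc => ?_⟩
    obtain ⟨i, hi⟩ := occursX_prefixWordX_iff.1 hocc
    exact disjoint_left.1 hm (hshift.iterate i hζ) (cylinder_anti _ (le_max_right _ _) hi)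
  · ext ξ
    simp only [Finite.mem_toFinset]
    refine ⟨fun hξ w hw hocc => hw.2 ξ hξ hocc, fun hξ => ?_⟩
    refine hK.mem_of_forall_inter_cylinder_nonempty hKc fun i => ?_
    obtain ⟨ζ, hζ, hocc⟩ : ∃ ζ ∈ K, OccursX (prefixWordX (shiftX^[i] ξ) L) ζ := by
      by_contra! h
      exact hξ _ ⟨length_prefixWordX _ L, h⟩
        (occursX_prefixWordX_iff.2 ⟨i, self_mem_cylinder _ _⟩)
    obtain ⟨j, hj⟩ := occursX_prefixWordX_iff.1 hocc
    exact ⟨_, hshift.iterate j hζ, cylinder_anti _ (le_max_left _ _) hj⟩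

end Memory

theorem finiteType_tfae_general {J : ℕ}
    (K : Set (ℕ → Fin (J+1))) (hK : IsSubshift K) :
    List.TFAE [IsFiniteType K,
      IsClosed (exitX K),
      K ∩ closure (exitX K) = ∅] := by
  obtain ⟨-, hKc, hKu, hKs⟩ := hK
  have hshift : MapsTo shiftX K K := fun ξ hξ => hKs.superset (mem_image_of_mem shiftX hξ)
  rw [← disjoint_iff_inter_eq_empty]
  tfae_have 1 → 3 := fun h => (exists_hasMemory_iff_disjoint_closure_exitX hKc).1
    h.exists_hasMemory
  tfae_have 3 → 1 := fun h => by
    obtain ⟨N, hN⟩ := (exists_hasMemory_iff_disjoint_closure_exitX hKc).2 h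
    exact hN.isFiniteType hKc hshift hKu
  tfae_have 2 ↔ 3 := isClosed_exitX_iff hKc
  tfae_finish

/-- For a subshift `K`, the following are equivalent:
(i) `K` is of finite type; (ii) `K_e^c` is closed; (iii) `K ∩ closure K_e^c = ∅`. -/
theorem finiteType_tfae {J : ℕ} (hJ : 1 ≤ J)
    (K : Set (ℕ → Fin (J+1))) (hK : IsSubshift K) :
    List.TFAE [IsFiniteType K,
      IsClosed (exitX K),
      K ∩ closure (exitX K) = ∅] :=
  finiteType_tfae_general K hK
end

section
/- Let J ≥ 1, let K ⊂ X = {0,…,J}^{ℤ₋} be a subshift, and let ξ₀ ∈ X with ρ_K(ξ₀) = 2^{−l} for an integer l ≥ 0 (in particular ξ₀ ∉ K). Then for every choice of symbols x₁,x₂,… ∈ {0,…,J}, the sample path ξ_t := ξ_{t−1}·x_t satisfies ρ_{K_e^c}(ξ_t) ≥ 2^{−(t+l)} for every t ≥ 1, where K_e^c is the set of exit points of K. -/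
open Set Topology

open Classical in
/-- The metric `ρ` on `X`: `2^{-l}` where `l` is the first index of disagreement. -/
noncomputable def rhoX {J : ℕ} (ξ ξ' : ℕ → Fin (J+1)) : ℝ :=
  if h : ξ = ξ' then 0 else (2 : ℝ) ^ (-(Nat.find (Function.ne_iff.mp h) : ℤ))

/-- `ρ_E(ξ) = inf_{η ∈ E} ρ(ξ,η)`. -/
noncomputable def rhoSet {J : ℕ} (E : Set (ℕ → Fin (J+1))) (ξ : ℕ → Fin (J+1)) : ℝ :=
  sInf (rhoX ξ '' E)


lemma rhoX_nonneg {J : ℕ} (ξ ξ' : ℕ → Fin (J+1)) : 0 ≤ rhoX ξ ξ' := by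
  unfold rhoX
  split
  · exact le_refl _
  · positivity

lemma rhoX_self {J : ℕ} (ξ : ℕ → Fin (J+1)) : rhoX ξ ξ = 0 := by
  unfold rhoX; simp

open Classical in
lemma agree_of_rhoX_lt {J : ℕ} {ξ ξ' : ℕ → Fin (J+1)} {m : ℕ}
    (h : rhoX ξ ξ' < (2:ℝ) ^ (-(m:ℤ))) : ∀ n ≤ m, ξ n = ξ' n := by
  intro n hn
  unfold rhoX at h
  split at h
  · subst ‹ξ = ξ'›; rfl
  · rename_i hne
    rw [zpow_lt_zpow_iff_right₀ one_lt_two, neg_lt_neg_iff, Int.ofNat_lt] at h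
    by_contra hc
    exact Nat.find_min (Function.ne_iff.mp hne) (lt_of_le_of_lt hn h) hc

open Classical in
lemma rhoX_le_of_agree {J : ℕ} {ξ ξ' : ℕ → Fin (J+1)} {m : ℕ}
    (h : ∀ n ≤ m, ξ n = ξ' n) : rhoX ξ ξ' ≤ (2:ℝ) ^ (-((m:ℤ)+1)) := by
  unfold rhoX
  split
  · positivity
  · rename_i hne
    apply zpow_le_zpow_right₀ one_le_two
    have : m + 1 ≤ Nat.find (Function.ne_iff.mp hne) := by
      by_contra hc
      push_neg at hc
      exact Nat.find_spec (Function.ne_iff.mp hne)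
        (h _ (Nat.lt_succ_iff.mp hc))
    omega

lemma rhoSet_le_rhoX {J : ℕ} {E : Set (ℕ → Fin (J+1))} {ξ η : ℕ → Fin (J+1)}
    (hη : η ∈ E) : rhoSet E ξ ≤ rhoX ξ η := by
  apply csInf_le
  · exact ⟨0, fun y ⟨a, _, ha⟩ => ha ▸ rhoX_nonneg ξ a⟩
  · exact Set.mem_image_of_mem _ hη

/-- If `ρ_K(ξ₀) = 2^{-l}`, then every sample path `ξ_t = ξ_{t-1}·x_t`
satisfies `ρ_{K_e^c}(ξ_t) ≥ 2^{-(t+l)}` for all `t ≥ 1`. -/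
theorem rhoSet_exitPoints_samplePath_ge {J : ℕ} (hJ : 1 ≤ J)
    (K : Set (ℕ → Fin (J+1))) (hK : IsSubshift K)
    (ξ₀ : ℕ → Fin (J+1)) (l : ℕ) (hl : rhoSet K ξ₀ = (2 : ℝ) ^ (-(l : ℤ)))
    (x : ℕ → Fin (J+1)) (path : ℕ → (ℕ → Fin (J+1)))
    (h0 : path 0 = ξ₀) (hstep : ∀ t : ℕ, path (t+1) = consX (x (t+1)) (path t)) :
    ∀ t : ℕ, 1 ≤ t → (2 : ℝ) ^ (-((t : ℤ) + (l : ℤ))) ≤ rhoSet (exitX K) (path t) := by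
  obtain ⟨⟨ζ₀, hζ₀⟩, hclosed, hproper, hinv⟩ := hK
  -- the shift preserves K
  have hshift : ∀ ξ ∈ K, shiftX ξ ∈ K := by
    intro ξ hξ
    rw [hinv]
    exact Set.mem_image_of_mem _ hξ
  -- iterated shifts
  have hiter : ∀ (s : ℕ) (ξ : ℕ → Fin (J+1)), ξ ∈ K → (fun n => ξ (n + s)) ∈ K := by
    intro s
    induction s with
    | zero => intro ξ h; simpa using h
    | succ s ih =>
      intro ξ h
      have h2 := hshift _ (ih ξ h)
      have : shiftX (fun n => ξ (n + s)) = fun n => ξ (n + (s+1)) := by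
        funext n
        exact congrArg ξ (by omega)
      rwa [this] at h2
  -- the exit set is nonempty
  have hexit : (exitX K).Nonempty := by
    by_contra hne'
    rw [Set.not_nonempty_iff_eq_empty] at hne'
    have hext : ∀ (a : Fin (J+1)) (ζ : ℕ → Fin (J+1)), ζ ∈ K → consX a ζ ∈ K := by
      intro a ζ hζ
      by_contra hc
      have hmem : consX a ζ ∈ exitX K := ⟨hc, hζ⟩
      rw [hne'] at hmem
      exact hmem
    have hseq : ∀ (n : ℕ) (ξ : ℕ → Fin (J+1)),
        (fun m => if m < n then ξ m else ζ₀ (m - n)) ∈ K := by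
      intro n
      induction n with
      | zero => intro ξ; simpa using hζ₀
      | succ n ih =>
        intro ξ
        have heq : (fun m => if m < n+1 then ξ m else ζ₀ (m - (n+1)))
            = consX (ξ 0) (fun m => if m < n then shiftX ξ m else ζ₀ (m - n)) := by
          funext m
          cases m with
          | zero => simp [consX]
          | succ m => simp [consX, shiftX, Nat.succ_lt_succ_iff, Nat.succ_sub_succ]
        rw [heq]
        exact hext _ _ (ih (shiftX ξ))
    apply hproper
    ext ξ
    simp only [Set.mem_univ, iff_true]
    have htd : Filter.Tendsto (fun n => (fun m => if m < n then ξ m else ζ₀ (m - n)))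
        Filter.atTop (nhds ξ) := by
      rw [tendsto_pi_nhds]
      intro i
      refine Filter.Tendsto.congr' ?_ tendsto_const_nhds
      filter_upwards [Filter.eventually_ge_atTop (i+1)] with n hn
      rw [if_pos (by omega)]
    exact hclosed.mem_of_tendsto htd (Filter.Eventually.of_forall (fun n => hseq n ξ))
  -- path evaluation
  have hpath : ∀ (t n : ℕ), path t (n + t) = ξ₀ n := by
    intro t
    induction t with
    | zero => intro n; simp [h0]
    | succ t ih =>
      intro n
      rw [hstep]
      exact ih n
  -- main argument
  intro t ht
  obtain ⟨s, rfl⟩ : ∃ s, t = s + 1 := ⟨t - 1, by omega⟩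
  apply le_csInf (hexit.image _)
  rintro b ⟨η, ⟨hηK, hηsh⟩, rfl⟩
  by_contra hlt
  push_neg at hlt
  have hcast : (-((((s+1:ℕ)) : ℤ) + (l : ℤ))) = (-(((s+1+l : ℕ)) : ℤ)) := by push_cast; ring
  rw [hcast] at hlt
  have hagree : ∀ n ≤ s + 1 + l, path (s+1) n = η n := agree_of_rhoX_lt hlt
  -- the shifted tail of η lies in K
  have hζK : (fun n => η (n + (s+1))) ∈ K := by
    have := hiter s (shiftX η) hηsh
    have heq : (fun n => shiftX η (n + s)) = fun n => η (n + (s+1)) := by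
      funext n
      exact congrArg η (by omega)
    rwa [heq] at this
  -- ξ₀ agrees with this tail up to index l
  have hagree₀ : ∀ n ≤ l, ξ₀ n = η (n + (s+1)) := by
    intro n hn
    rw [← hpath (s+1) n]
    exact hagree (n + (s+1)) (by omega)
  have h1 : rhoX ξ₀ (fun n => η (n + (s+1))) ≤ (2:ℝ) ^ (-((l:ℤ)+1)) :=
    rhoX_le_of_agree hagree₀
  have h2 : rhoSet K ξ₀ ≤ (2:ℝ) ^ (-((l:ℤ)+1)) :=
    le_trans (rhoSet_le_rhoX hζK) h1
  rw [hl] at h2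
  have h3 : (2:ℝ) ^ (-((l:ℤ)+1)) < (2:ℝ) ^ (-(l:ℤ)) :=
    zpow_lt_zpow_right₀ one_lt_two (by omega)
  linarith
end

section
/- There exists a subshift K of X = {0,1}^{ℤ₋} that is not of finite type but satisfies closure(K_e^c) ∩ closure(K_b) = ∅. (For example, K = X_F with F = {(0,0,0,0), (1,1,1,1)} ∪ ⋃_{n≥1} {(0,(0,1,0)^n,0), (1,(1,0,1)^n,1)}, where (0,1,0)^n denotes n-fold concatenation of (0,1,0) and similarly for (1,0,1)^n.) -/
open Set Topology

/- ### Auxiliary development: the even shift -/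

/-- The forbidden pattern `1 0^{2k+1} 1` occurring at position `i`. -/
def BadAt (ξ : ℕ → Fin 2) (i k : ℕ) : Prop :=
  ξ i = 1 ∧ ξ (i + (2*k+2)) = 1 ∧ ∀ j, 0 < j → j < 2*k+2 → ξ (i + j) = 0

/-- The even shift. -/
def EvenK : Set (ℕ → Fin 2) := {ξ | ¬ ∃ i k, BadAt ξ i k}

lemma isClosed_coord (n : ℕ) (c : Fin 2) : IsClosed {ξ : ℕ → Fin 2 | ξ n = c} := by
  have : {ξ : ℕ → Fin 2 | ξ n = c} = (fun ξ : ℕ → Fin 2 => ξ n) ⁻¹' {c} := rfl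
  rw [this]
  exact (isClosed_discrete ({c} : Set (Fin 2))).preimage (continuous_apply n)

lemma isOpen_coord (n : ℕ) (c : Fin 2) : IsOpen {ξ : ℕ → Fin 2 | ξ n = c} := by
  have : {ξ : ℕ → Fin 2 | ξ n = c} = (fun ξ : ℕ → Fin 2 => ξ n) ⁻¹' {c} := rfl
  rw [this]
  exact (isOpen_discrete ({c} : Set (Fin 2))).preimage (continuous_apply n)

lemma isClosed_EvenK : IsClosed EvenK := by
  rw [← isOpen_compl_iff]
  have h : EvenKᶜ = ⋃ i, ⋃ k, ({ξ : ℕ → Fin 2 | ξ i = 1} ∩ {ξ | ξ (i+(2*k+2)) = 1} ∩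
      ⋂ j ∈ Finset.Ioo 0 (2*k+2), {ξ | ξ (i+j) = 0}) := by
    ext ξ
    simp only [EvenK, BadAt, Set.mem_compl_iff, Set.mem_setOf_eq, not_not,
      Set.mem_iUnion, Set.mem_inter_iff, Set.mem_iInter, Finset.mem_Ioo, and_imp]
    tauto
  rw [h]
  refine isOpen_iUnion fun i => isOpen_iUnion fun k => ?_
  exact ((isOpen_coord _ _).inter (isOpen_coord _ _)).inter
    (isOpen_biInter_finset fun j _ => isOpen_coord _ _)

lemma shift_badAt {ξ : ℕ → Fin 2} {i k : ℕ} (h : BadAt (shiftX ξ) i k) : BadAt ξ (i+1) k := by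
  obtain ⟨h1, h2, h3⟩ := h
  refine ⟨h1, ?_, ?_⟩
  · show ξ (i + 1 + (2*k+2)) = 1
    rw [show i + 1 + (2*k+2) = i + (2*k+2) + 1 from by omega]
    exact h2
  · intro j hj1 hj2
    rw [show i + 1 + j = i + j + 1 from by omega]
    exact h3 j hj1 hj2

lemma cons_zero_mem {ξ : ℕ → Fin 2} (h : ξ ∈ EvenK) : consX 0 ξ ∈ EvenK := by
  rintro ⟨i, k, h1, h2, h3⟩
  match i with
  | 0 => exact (by decide : (0:Fin 2) ≠ 1) h1
  | i+1 =>
    refine h ⟨i, k, h1, ?_, ?_⟩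
    · have := h2
      rwa [show i + 1 + (2*k+2) = (i + (2*k+2)) + 1 from by omega] at this
    · intro j hj1 hj2
      have := h3 j hj1 hj2
      rwa [show i + 1 + j = (i + j) + 1 from by omega] at this

lemma EvenK_subshift : IsSubshift EvenK := by
  refine ⟨⟨fun _ => 0, ?_⟩, isClosed_EvenK, ?_, ?_⟩
  · rintro ⟨i, k, h1, _, _⟩
    exact (by decide : (0:Fin 2) ≠ 1) h1
  · intro h
    have : (fun n => if n = 1 then (0 : Fin 2) else 1) ∈ EvenK := h ▸ Set.mem_univ _
    exact this ⟨0, 0, by norm_num, by norm_num, by intro j h1 h2; interval_cases j; norm_num⟩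
  · ext ξ
    constructor
    · intro hξ
      exact ⟨consX 0 ξ, cons_zero_mem hξ, funext fun n => rfl⟩
    · rintro ⟨η, hη, rfl⟩
      rintro ⟨i, k, hb⟩
      exact hη ⟨i+1, k, shift_badAt hb⟩

lemma exit_coord {ξ : ℕ → Fin 2} (h : ξ ∈ exitX EvenK) : ξ 0 = 1 := by
  obtain ⟨hn, hs⟩ := h
  rw [EvenK, Set.mem_setOf_eq, not_not] at hn
  obtain ⟨i, k, hb⟩ := hn
  match i with
  | 0 => exact hb.1
  | i+1 =>
    exfalso
    refine hs ⟨i, k, hb.1, ?_, ?_⟩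
    · show ξ (i + (2*k+2) + 1) = 1
      have := hb.2.1
      rwa [show i + 1 + (2*k+2) = i + (2*k+2) + 1 from by omega] at this
    · intro j hj1 hj2
      show ξ (i + j + 1) = 0
      have := hb.2.2 j hj1 hj2
      rwa [show i + 1 + j = i + j + 1 from by omega] at this

lemma not_finiteType_EvenK : ¬ IsFiniteType EvenK := by
  rintro ⟨F, -, hF⟩
  set N := F.sup List.length with hN
  set ζ : ℕ → Fin 2 := fun n => if n = 0 ∨ n = 2*N+4 then 1 else 0 with hζdef
  set ζ' : ℕ → Fin 2 := fun n => if n = 0 ∨ n = 2*N+5 then 1 else 0 with hζ'def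
  have hζ : ζ ∉ EvenK := by
    intro h
    refine h ⟨0, N+1, ?_, ?_, ?_⟩
    · simp [hζdef]
    · show ζ (0 + (2*(N+1)+2)) = 1
      have : 0 + (2*(N+1)+2) = 2*N+4 := by omega
      rw [this]; simp [hζdef]
    · intro j hj1 hj2
      show ζ (0 + j) = 0
      have h0 : ¬ (0 + j = 0 ∨ 0 + j = 2*N+4) := by omega
      simp only [hζdef, if_neg h0]
  have hζ' : ζ' ∈ EvenK := by
    rintro ⟨i, k, h1, h2, -⟩
    have hi : i = 0 ∨ i = 2*N+5 := by
      by_contra hc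
      rw [hζ'def] at h1
      simp only [if_neg hc] at h1
      exact absurd h1 (by decide)
    have hi2 : i + (2*k+2) = 0 ∨ i + (2*k+2) = 2*N+5 := by
      by_contra hc
      rw [hζ'def] at h2
      simp only [if_neg hc] at h2
      exact absurd h2 (by decide)
    omega
  rw [hF] at hζ hζ'
  simp only [Set.mem_setOf_eq, not_forall, not_not] at hζ
  obtain ⟨w, hwF, i, hocc⟩ := hζ
  have hlen : w.length ≤ N := Finset.le_sup hwF
  refine hζ' w hwF ?_
  rcases Nat.eq_zero_or_pos i with rfl | hi
  · refine ⟨0, fun k hk => ?_⟩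
    rw [← hocc k hk]
    have hk' : k < N := lt_of_lt_of_le hk hlen
    show ζ' (0 + k) = ζ (0 + k)
    rcases Nat.eq_zero_or_pos k with rfl | hkpos
    · simp [hζdef, hζ'def]
    · have c1 : ¬ (0 + k = 0 ∨ 0 + k = 2*N+5) := by omega
      have c2 : ¬ (0 + k = 0 ∨ 0 + k = 2*N+4) := by omega
      simp only [hζdef, hζ'def, if_neg c1, if_neg c2]
  · refine ⟨i+1, fun k hk => ?_⟩
    rw [← hocc k hk]
    show ζ' (i + 1 + k) = ζ (i + k)
    by_cases hc : i + k = 2*N+4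
    · have c1 : i + 1 + k = 0 ∨ i + 1 + k = 2*N+5 := by omega
      have c2 : i + k = 0 ∨ i + k = 2*N+4 := by omega
      simp only [hζdef, hζ'def, if_pos c1, if_pos c2]
    · have c1 : ¬ (i + 1 + k = 0 ∨ i + 1 + k = 2*N+5) := by omega
      have c2 : ¬ (i + k = 0 ∨ i + k = 2*N+4) := by omega
      simp only [hζdef, hζ'def, if_neg c1, if_neg c2]

/-- There is a subshift of `{0,1}^{ℤ₋}` that is not of finite type
but satisfies `closure(K_e^c) ∩ closure(K_b) = ∅`. -/
theorem exists_subshift_not_finiteType_with_disjoint_closures :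
    ∃ K : Set (ℕ → Fin 2), IsSubshift K ∧ ¬ IsFiniteType K ∧
      closure (exitX K) ∩ closure {ξ : ℕ → Fin 2 | starX 1 ξ ∈ exitX K} = ∅ := by
  refine ⟨EvenK, EvenK_subshift, not_finiteType_EvenK, ?_⟩
  have h1 : closure (exitX EvenK) ⊆ {ξ : ℕ → Fin 2 | ξ 0 = 1} :=
    closure_minimal (fun ξ hξ => exit_coord hξ) (isClosed_coord 0 1)
  have h2 : closure {ξ : ℕ → Fin 2 | starX 1 ξ ∈ exitX EvenK} ⊆ {ξ : ℕ → Fin 2 | ξ 0 = 0} := by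
    refine closure_minimal (fun ξ hξ => ?_) (isClosed_coord 0 0)
    have := exit_coord hξ
    have hs : starX 1 ξ 0 = ξ 0 + 1 := rfl
    rw [hs] at this
    have key : ∀ a : Fin 2, a + 1 = 1 → a = 0 := by decide
    exact key _ this
  rw [Set.eq_empty_iff_forall_notMem]
  intro ξ ⟨hξ1, hξ2⟩
  have e1 := h1 hξ1
  have e2 := h2 hξ2
  simp only [Set.mem_setOf_eq] at e1 e2
  rw [e1] at e2
  exact absurd e2 (by decide)
end
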